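/- arXiv:1702.04947 — 7 statements merged into one kernel-verified Lean document; each statement's English description precedes it below -/
import Mathlib

section
/- Let (u,d) and (v,h) both satisfy the vertex-continuity conditions. Then ⟨A_𝔞(u,d),(v,h)⟩ = −Σ_{j=1}^m ∫₀¹ c_j(x) u_j′(x) v_j′(x) dx + Σ_{α=1}^n b_α d_α h_α; that is, the operator A_𝔞 is associated with (the negative of) the sesquilinear form 𝔞((u,d),(v,h)) = Σ_{j=1}^m ∫₀¹ c_j u_j′ v_j′ dx − Σ_{α=1}^n b_α d_α h_α. -/
/-
Integrating by parts on each edge turns `∫ (c u')' v` into `-∫ c u' v'` plus the boundary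
fluxes `c u' v` at both endpoints. By vertex continuity `v_j` takes the value `h_α` at every
endpoint lying at the vertex `α`, so regrouping the boundary terms by vertices gives exactly
`-∑_α (C u)_α h_α`, which cancels the Kirchhoff part of `⟨A_𝔞(u,d),(v,h)⟩`.
-/

open MeasureTheory Set

theorem integral_deriv_mul_eq_sub_integral_mul_deriv {a b : ℝ} {f f' g g' : ℝ → ℝ}
    (hf : ∀ x ∈ uIcc a b, HasDerivAt f (f' x) x) (hf' : ContinuousOn f' (uIcc a b))
    (hg : ∀ x ∈ uIcc a b, HasDerivAt g (g' x) x) (hg' : ContinuousOn g' (uIcc a b)) :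
    ∫ x in a..b, f' x * g x = f b * g b - f a * g a - ∫ x in a..b, f x * g' x := by
  simp_rw [mul_comm (f' _), mul_comm (f _)]
  exact intervalIntegral.integral_mul_deriv_eq_deriv_mul hg hf hg'.intervalIntegrable
    hf'.intervalIntegrable

theorem sum_incidence_mul_eq_sum_endpoints {R ι V : Type*} [CommRing R] [Fintype ι] [Fintype V]
    [DecidableEq V] (e₀ e₁ : ι → V) (F₀ F₁ : ι → R) (h : V → R) :
    ∑ α, (∑ j, ((if e₀ j = α then (1:R) else 0) * F₀ j
        - (if e₁ j = α then (1:R) else 0) * F₁ j)) * h α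
      = ∑ j, (F₀ j * h (e₀ j) - F₁ j * h (e₁ j)) := by
  simp_rw [Finset.sum_mul, sub_mul]
  rw [Finset.sum_comm]
  simp [ite_mul, Finset.sum_sub_distrib]

theorem statement0_general
    (m n : ℕ) (e₀ e₁ : Fin m → Fin n)
    (c : Fin m → ℝ → ℝ)
    (u' w' v v' : Fin m → ℝ → ℝ)
    (b d h : Fin n → ℝ)
    -- `u_j ∈ C²([0,1])`: `u_j' = u' j` and `(c_j u_j')' = w' j`, all continuous on `[0,1]`
    (hw : ∀ j, ∀ x ∈ Icc (0:ℝ) 1, HasDerivAt (fun y => c j y * u' j y) (w' j x) x)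
    (hw' : ∀ j, ContinuousOn (w' j) (Icc (0:ℝ) 1))
    -- `v_j ∈ C²([0,1])` (only the first derivative is needed)
    (hv : ∀ j, ∀ x ∈ Icc (0:ℝ) 1, HasDerivAt (v j) (v' j x) x)
    (hv' : ∀ j, ContinuousOn (v' j) (Icc (0:ℝ) 1))
    -- vertex-continuity conditions for `(u,d)` and `(v,h)`
    (hvh0 : ∀ j, v j 0 = h (e₀ j)) (hvh1 : ∀ j, v j 1 = h (e₁ j)) :
    (∑ j, ∫ x in (0:ℝ)..1, w' j x * v j x)
      + ∑ α, ((∑ j, ((if e₀ j = α then (1:ℝ) else 0) * (c j 0 * u' j 0)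
            - (if e₁ j = α then (1:ℝ) else 0) * (c j 1 * u' j 1))) + b α * d α) * h α
      = -(∑ j, ∫ x in (0:ℝ)..1, c j x * u' j x * v' j x) + ∑ α, b α * d α * h α := by
  have h01 : uIcc (0:ℝ) 1 = Icc 0 1 := uIcc_of_le zero_le_one
  have by_parts : ∀ j, ∫ x in (0:ℝ)..1, w' j x * v j x
      = c j 1 * u' j 1 * h (e₁ j) - c j 0 * u' j 0 * h (e₀ j)
        - ∫ x in (0:ℝ)..1, c j x * u' j x * v' j x := by
    intro j
    rw [← hvh0, ← hvh1]
    exact integral_deriv_mul_eq_sub_integral_mul_deriv (h01 ▸ hw j) (h01 ▸ hw' j)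
      (h01 ▸ hv j) (h01 ▸ hv' j)
  simp only [add_mul, Finset.sum_add_distrib]
  rw [sum_incidence_mul_eq_sum_endpoints]
  simp only [by_parts, Finset.sum_sub_distrib]
  ring

/-- If `(u,d)` and `(v,h)` satisfy the vertex-continuity conditions on a
finite network (edges `j : Fin m` identified with `[0,1]`, initial vertex `e₀ j`, terminal
vertex `e₁ j`), then `⟨A_𝔞(u,d),(v,h)⟩ = -∑_j ∫₀¹ c_j u_j' v_j' + ∑_α b_α d_α h_α`,
i.e. `A_𝔞` is associated with (the negative of) the form `𝔞`.  Here
`A_𝔞 (u,d) = ( ((c_j u_j')')_j , C u + B d )` with the Kirchhoff feedback operator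
`(C u)_α = ∑_j (φ⁺_{αj} c_j(0) u_j'(0) - φ⁻_{αj} c_j(1) u_j'(1))`, `B = diag b`, and the inner
product `⟨(u,d),(v,h)⟩ = ∑_j ∫₀¹ u_j v_j + ∑_α d_α h_α`. -/
theorem statement0
    (m n : ℕ) (e₀ e₁ : Fin m → Fin n)
    (c c' : Fin m → ℝ → ℝ)
    (u u' w' v v' : Fin m → ℝ → ℝ)
    (b d h : Fin n → ℝ)
    -- `c_j ∈ C¹([0,1])`
    (hc : ∀ j, ∀ x ∈ Icc (0:ℝ) 1, HasDerivAt (c j) (c' j x) x)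
    (hc' : ∀ j, ContinuousOn (c' j) (Icc (0:ℝ) 1))
    -- `u_j ∈ C²([0,1])`: `u_j' = u' j` and `(c_j u_j')' = w' j`, all continuous on `[0,1]`
    (hu : ∀ j, ∀ x ∈ Icc (0:ℝ) 1, HasDerivAt (u j) (u' j x) x)
    (hu' : ∀ j, ContinuousOn (u' j) (Icc (0:ℝ) 1))
    (hw : ∀ j, ∀ x ∈ Icc (0:ℝ) 1, HasDerivAt (fun y => c j y * u' j y) (w' j x) x)
    (hw' : ∀ j, ContinuousOn (w' j) (Icc (0:ℝ) 1))
    -- `v_j ∈ C²([0,1])` (only the first derivative is needed)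
    (hv : ∀ j, ∀ x ∈ Icc (0:ℝ) 1, HasDerivAt (v j) (v' j x) x)
    (hv' : ∀ j, ContinuousOn (v' j) (Icc (0:ℝ) 1))
    -- vertex-continuity conditions for `(u,d)` and `(v,h)`
    (hud0 : ∀ j, u j 0 = d (e₀ j)) (hud1 : ∀ j, u j 1 = d (e₁ j))
    (hvh0 : ∀ j, v j 0 = h (e₀ j)) (hvh1 : ∀ j, v j 1 = h (e₁ j)) :
    (∑ j, ∫ x in (0:ℝ)..1, w' j x * v j x)
      + ∑ α, ((∑ j, ((if e₀ j = α then (1:ℝ) else 0) * (c j 0 * u' j 0)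
            - (if e₁ j = α then (1:ℝ) else 0) * (c j 1 * u' j 1))) + b α * d α) * h α
      = -(∑ j, ∫ x in (0:ℝ)..1, c j x * u' j x * v' j x) + ∑ α, b α * d α * h α :=
  statement0_general m n e₀ e₁ c u' w' v v' b d h hw hw' hv hv' hvh0 hvh1
end

section
/- Let (u,d) and (v,h) both satisfy the vertex-continuity conditions. Then the operator A_𝔞 is symmetric on such pairs: ⟨A_𝔞(u,d),(v,h)⟩ = ⟨(u,d),A_𝔞(v,h)⟩. -/
/-!
On each edge, Lagrange's identity `(c u')' v - u (c v')' = (c u' v - u c v')'` turns the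
difference of the two integrals into the boundary term `c u' v - u c v'` evaluated between
`0` and `1`. Pairing the Kirchhoff sums with the vertex values and using the continuity
conditions `v_j(0) = h(e₀ j)`, ... produces exactly the same boundary terms with the opposite
sign, while the diagonal parts `b_α d_α h_α` agree.
-/

open MeasureTheory Set

theorem integral_lagrange_identity {a b : ℝ} {c u u' v v' f g : ℝ → ℝ}
    (hu : ∀ x ∈ uIcc a b, HasDerivAt u (u' x) x)
    (hv : ∀ x ∈ uIcc a b, HasDerivAt v (v' x) x)
    (hf : ∀ x ∈ uIcc a b, HasDerivAt (fun y => c y * u' y) (f x) x)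
    (hg : ∀ x ∈ uIcc a b, HasDerivAt (fun y => c y * v' y) (g x) x)
    (hfc : ContinuousOn f (uIcc a b)) (hgc : ContinuousOn g (uIcc a b)) :
    (∫ x in a..b, f x * v x) - ∫ x in a..b, u x * g x
      = (c b * u' b * v b - u b * (c b * v' b)) - (c a * u' a * v a - u a * (c a * v' a)) := by
  have huc : ContinuousOn u (uIcc a b) := fun x hx => (hu x hx).continuousAt.continuousWithinAt
  have hvc : ContinuousOn v (uIcc a b) := fun x hx => (hv x hx).continuousAt.continuousWithinAt
  have hderiv : ∀ x ∈ uIcc a b, HasDerivAt (fun y => c y * u' y * v y - u y * (c y * v' y))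
      (f x * v x - u x * g x) x := fun x hx =>
    (((hf x hx).mul (hv x hx)).sub ((hu x hx).mul (hg x hx))).congr_deriv (by ring)
  rw [← intervalIntegral.integral_sub (hfc.fun_mul hvc).intervalIntegrable
      (huc.fun_mul hgc).intervalIntegrable]
  exact intervalIntegral.integral_eq_sub_of_hasDerivAt hderiv
    ((hfc.fun_mul hvc).fun_sub (huc.fun_mul hgc)).intervalIntegrable

theorem sum_incidence_mul {ι κ R : Type*} [Fintype ι] [Fintype κ] [DecidableEq κ]
    [NonAssocRing R] (e₀ e₁ : ι → κ) (p q : ι → R) (w : κ → R) :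
    ∑ α, (∑ j, ((if e₀ j = α then (1:R) else 0) * p j
        - (if e₁ j = α then (1:R) else 0) * q j)) * w α
      = ∑ j, (p j * w (e₀ j) - q j * w (e₁ j)) := by
  simp only [Finset.sum_mul, sub_mul, ite_mul, one_mul, zero_mul, Finset.sum_sub_distrib]
  rw [Finset.sum_comm, Finset.sum_comm (f := fun α j => if e₁ j = α then q j * w α else 0)]
  simp only [Finset.sum_ite_eq, Finset.mem_univ, if_true]

theorem statement1_general
    (m n : ℕ) (e₀ e₁ : Fin m → Fin n)
    (c : Fin m → ℝ → ℝ)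
    (u u' wu' v v' wv' : Fin m → ℝ → ℝ)
    (b d h : Fin n → ℝ)
    -- `u_j ∈ C²([0,1])`: `u_j' = u' j` and `(c_j u_j')' = wu' j`, all continuous on `[0,1]`
    (hu : ∀ j, ∀ x ∈ Icc (0:ℝ) 1, HasDerivAt (u j) (u' j x) x)
    (hwu : ∀ j, ∀ x ∈ Icc (0:ℝ) 1, HasDerivAt (fun y => c j y * u' j y) (wu' j x) x)
    (hwu' : ∀ j, ContinuousOn (wu' j) (Icc (0:ℝ) 1))
    -- `v_j ∈ C²([0,1])`: `v_j' = v' j` and `(c_j v_j')' = wv' j`, all continuous on `[0,1]`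
    (hv : ∀ j, ∀ x ∈ Icc (0:ℝ) 1, HasDerivAt (v j) (v' j x) x)
    (hwv : ∀ j, ∀ x ∈ Icc (0:ℝ) 1, HasDerivAt (fun y => c j y * v' j y) (wv' j x) x)
    (hwv' : ∀ j, ContinuousOn (wv' j) (Icc (0:ℝ) 1))
    -- vertex-continuity conditions for `(u,d)` and `(v,h)`
    (hud0 : ∀ j, u j 0 = d (e₀ j)) (hud1 : ∀ j, u j 1 = d (e₁ j))
    (hvh0 : ∀ j, v j 0 = h (e₀ j)) (hvh1 : ∀ j, v j 1 = h (e₁ j)) :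
    (∑ j, ∫ x in (0:ℝ)..1, wu' j x * v j x)
      + ∑ α, ((∑ j, ((if e₀ j = α then (1:ℝ) else 0) * (c j 0 * u' j 0)
            - (if e₁ j = α then (1:ℝ) else 0) * (c j 1 * u' j 1))) + b α * d α) * h α
      = (∑ j, ∫ x in (0:ℝ)..1, u j x * wv' j x)
      + ∑ α, d α * ((∑ j, ((if e₀ j = α then (1:ℝ) else 0) * (c j 0 * v' j 0)
            - (if e₁ j = α then (1:ℝ) else 0) * (c j 1 * v' j 1))) + b α * h α) := by
  have h01 : uIcc (0:ℝ) 1 = Icc 0 1 := uIcc_of_le zero_le_one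
  have hedge j := integral_lagrange_identity (h01 ▸ hu j) (h01 ▸ hv j) (h01 ▸ hwu j)
    (h01 ▸ hwv j) (h01 ▸ hwu' j) (h01 ▸ hwv' j)
  simp only [add_mul, Finset.sum_add_distrib, mul_comm (d _), sum_incidence_mul]
  simp only [← hud0, ← hud1, ← hvh0, ← hvh1]
  have hdiag : ∑ α, b α * h α * d α = ∑ α, b α * d α * h α :=
    Finset.sum_congr rfl fun α _ => by ring
  rw [hdiag, ← add_assoc, ← add_assoc, ← Finset.sum_add_distrib, ← Finset.sum_add_distrib]
  congr 1
  refine Finset.sum_congr rfl fun j _ => ?_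
  linarith [hedge j]

/-- If `(u,d)` and `(v,h)` both satisfy the vertex-continuity conditions,
then `A_𝔞` is symmetric on such pairs: `⟨A_𝔞(u,d),(v,h)⟩ = ⟨(u,d),A_𝔞(v,h)⟩`, where
`A_𝔞 (u,d) = ( ((c_j u_j')')_j , C u + B d )`,
`(C u)_α = ∑_j (φ⁺_{αj} c_j(0) u_j'(0) - φ⁻_{αj} c_j(1) u_j'(1))`, `B = diag b`, and
`⟨(u,d),(v,h)⟩ = ∑_j ∫₀¹ u_j v_j + ∑_α d_α h_α`. -/
theorem statement1
    (m n : ℕ) (e₀ e₁ : Fin m → Fin n)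
    (c c' : Fin m → ℝ → ℝ)
    (u u' wu' v v' wv' : Fin m → ℝ → ℝ)
    (b d h : Fin n → ℝ)
    -- `c_j ∈ C¹([0,1])`
    (hc : ∀ j, ∀ x ∈ Icc (0:ℝ) 1, HasDerivAt (c j) (c' j x) x)
    (hc' : ∀ j, ContinuousOn (c' j) (Icc (0:ℝ) 1))
    -- `u_j ∈ C²([0,1])`: `u_j' = u' j` and `(c_j u_j')' = wu' j`, all continuous on `[0,1]`
    (hu : ∀ j, ∀ x ∈ Icc (0:ℝ) 1, HasDerivAt (u j) (u' j x) x)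
    (hu' : ∀ j, ContinuousOn (u' j) (Icc (0:ℝ) 1))
    (hwu : ∀ j, ∀ x ∈ Icc (0:ℝ) 1, HasDerivAt (fun y => c j y * u' j y) (wu' j x) x)
    (hwu' : ∀ j, ContinuousOn (wu' j) (Icc (0:ℝ) 1))
    -- `v_j ∈ C²([0,1])`: `v_j' = v' j` and `(c_j v_j')' = wv' j`, all continuous on `[0,1]`
    (hv : ∀ j, ∀ x ∈ Icc (0:ℝ) 1, HasDerivAt (v j) (v' j x) x)
    (hv' : ∀ j, ContinuousOn (v' j) (Icc (0:ℝ) 1))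
    (hwv : ∀ j, ∀ x ∈ Icc (0:ℝ) 1, HasDerivAt (fun y => c j y * v' j y) (wv' j x) x)
    (hwv' : ∀ j, ContinuousOn (wv' j) (Icc (0:ℝ) 1))
    -- vertex-continuity conditions for `(u,d)` and `(v,h)`
    (hud0 : ∀ j, u j 0 = d (e₀ j)) (hud1 : ∀ j, u j 1 = d (e₁ j))
    (hvh0 : ∀ j, v j 0 = h (e₀ j)) (hvh1 : ∀ j, v j 1 = h (e₁ j)) :
    (∑ j, ∫ x in (0:ℝ)..1, wu' j x * v j x)
      + ∑ α, ((∑ j, ((if e₀ j = α then (1:ℝ) else 0) * (c j 0 * u' j 0)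
            - (if e₁ j = α then (1:ℝ) else 0) * (c j 1 * u' j 1))) + b α * d α) * h α
      = (∑ j, ∫ x in (0:ℝ)..1, u j x * wv' j x)
      + ∑ α, d α * ((∑ j, ((if e₀ j = α then (1:ℝ) else 0) * (c j 0 * v' j 0)
            - (if e₁ j = α then (1:ℝ) else 0) * (c j 1 * v' j 1))) + b α * h α) :=
  statement1_general m n e₀ e₁ c u u' wu' v v' wv' b d h hu hwu hwu' hv hwv hwv' hud0 hud1 hvh0 hvh1
end

section
/- Assume in addition that c_j(x) ≥ 0 for all x ∈ [0,1] and all j = 1,…,m, and that b_α ≤ 0 for all α = 1,…,n. Then A_𝔞 is dissipative on pairs satisfying the vertex-continuity conditions: ⟨A_𝔞(u,d),(u,d)⟩ = −Σ_{j=1}^m ∫₀¹ c_j(x) (u_j′(x))² dx + Σ_{α=1}^n b_α d_α² ≤ 0. -/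
open MeasureTheory Set

/-!
Integrating by parts on every edge turns `∫ (c u')' u` into `-∫ c u'²` plus the boundary fluxes
`c u' u` at the two endpoints. By vertex continuity the endpoint values of `u` are the vertex
values `d`, so these fluxes cancel exactly against the Kirchhoff term `⟨C u, d⟩`, leaving
`-∑ ∫ c u'² + ∑ b d²`, which is `≤ 0` when `c ≥ 0` and `b ≤ 0`.
-/

theorem intervalIntegral.integral_deriv_flux_mul_eq {a b : ℝ} {c u u' w' : ℝ → ℝ}
    (hu : ∀ x ∈ uIcc a b, HasDerivAt u (u' x) x) (hu' : ContinuousOn u' (uIcc a b))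
    (hw : ∀ x ∈ uIcc a b, HasDerivAt (fun y => c y * u' y) (w' x) x)
    (hw' : ContinuousOn w' (uIcc a b)) :
    ∫ x in a..b, w' x * u x
      = c b * u' b * u b - c a * u' a * u a - ∫ x in a..b, c x * u' x ^ 2 := by
  have hparts := intervalIntegral.integral_mul_deriv_eq_deriv_mul hu hw
    hu'.intervalIntegrable hw'.intervalIntegrable
  simp only [mul_comm (u _)] at hparts
  rw [hparts]
  congr 1
  exact intervalIntegral.integral_congr fun x _ => by ring

theorem Finset.sum_incidence_mul_eq {ι κ R : Type*} [Fintype ι] [Fintype κ] [DecidableEq κ]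
    [CommRing R] (e₀ e₁ : ι → κ) (f g : ι → R) (d : κ → R) :
    ∑ α, (∑ j, ((if e₀ j = α then (1:R) else 0) * f j
        - (if e₁ j = α then (1:R) else 0) * g j)) * d α
      = ∑ j, (f j * d (e₀ j) - g j * d (e₁ j)) := by
  simp only [Finset.sum_mul, sub_mul, ite_mul, one_mul, zero_mul]
  rw [Finset.sum_comm]
  simp [Finset.sum_sub_distrib]

theorem statement2_general
    (m n : ℕ) (e₀ e₁ : Fin m → Fin n)
    (c : Fin m → ℝ → ℝ)
    (u u' w' : Fin m → ℝ → ℝ)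
    (b d : Fin n → ℝ)
    -- `c_j ∈ C¹([0,1])`, `c_j ≥ 0` on `[0,1]`, and `b_α ≤ 0`
    (hcpos : ∀ j, ∀ x ∈ Icc (0:ℝ) 1, 0 ≤ c j x)
    (hb : ∀ α, b α ≤ 0)
    -- `u_j ∈ C²([0,1])`: `u_j' = u' j` and `(c_j u_j')' = w' j`, all continuous on `[0,1]`
    (hu : ∀ j, ∀ x ∈ Icc (0:ℝ) 1, HasDerivAt (u j) (u' j x) x)
    (hu' : ∀ j, ContinuousOn (u' j) (Icc (0:ℝ) 1))
    (hw : ∀ j, ∀ x ∈ Icc (0:ℝ) 1, HasDerivAt (fun y => c j y * u' j y) (w' j x) x)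
    (hw' : ∀ j, ContinuousOn (w' j) (Icc (0:ℝ) 1))
    -- vertex-continuity conditions for `(u,d)`
    (hud0 : ∀ j, u j 0 = d (e₀ j)) (hud1 : ∀ j, u j 1 = d (e₁ j)) :
    (∑ j, ∫ x in (0:ℝ)..1, w' j x * u j x)
      + ∑ α, ((∑ j, ((if e₀ j = α then (1:ℝ) else 0) * (c j 0 * u' j 0)
            - (if e₁ j = α then (1:ℝ) else 0) * (c j 1 * u' j 1))) + b α * d α) * d α
      = -(∑ j, ∫ x in (0:ℝ)..1, c j x * (u' j x) ^ 2) + ∑ α, b α * d α ^ 2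
    ∧ -(∑ j, ∫ x in (0:ℝ)..1, c j x * (u' j x) ^ 2) + ∑ α, b α * d α ^ 2 ≤ 0 := by
  rw [← uIcc_of_le zero_le_one] at hu hu' hw hw'
  have hedge : ∀ j, ∫ x in (0:ℝ)..1, w' j x * u j x
      = c j 1 * u' j 1 * d (e₁ j) - c j 0 * u' j 0 * d (e₀ j)
        - ∫ x in (0:ℝ)..1, c j x * u' j x ^ 2 := fun j => by
    rw [← hud0, ← hud1]
    exact intervalIntegral.integral_deriv_flux_mul_eq (hu j) (hu' j) (hw j) (hw' j)
  have henergy : 0 ≤ ∑ j, ∫ x in (0:ℝ)..1, c j x * u' j x ^ 2 :=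
    Finset.sum_nonneg fun j _ => intervalIntegral.integral_nonneg zero_le_one fun x hx =>
      mul_nonneg (hcpos j x hx) (sq_nonneg _)
  have hboundary : ∑ α, b α * d α ^ 2 ≤ 0 :=
    Finset.sum_nonpos fun α _ => mul_nonpos_of_nonpos_of_nonneg (hb α) (sq_nonneg _)
  refine ⟨?_, by linarith⟩
  simp only [add_mul, Finset.sum_add_distrib, hedge]
  rw [Finset.sum_incidence_mul_eq]
  simp only [Finset.sum_sub_distrib, mul_assoc, ← sq]
  ring

/-- If moreover `c_j ≥ 0` on `[0,1]` and `b_α ≤ 0`, then `A_𝔞` is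
dissipative on pairs satisfying the vertex-continuity conditions:
`⟨A_𝔞(u,d),(u,d)⟩ = -∑_j ∫₀¹ c_j (u_j')² + ∑_α b_α d_α² ≤ 0`. -/
theorem statement2
    (m n : ℕ) (e₀ e₁ : Fin m → Fin n)
    (c c' : Fin m → ℝ → ℝ)
    (u u' w' : Fin m → ℝ → ℝ)
    (b d : Fin n → ℝ)
    -- `c_j ∈ C¹([0,1])`, `c_j ≥ 0` on `[0,1]`, and `b_α ≤ 0`
    (hc : ∀ j, ∀ x ∈ Icc (0:ℝ) 1, HasDerivAt (c j) (c' j x) x)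
    (hc' : ∀ j, ContinuousOn (c' j) (Icc (0:ℝ) 1))
    (hcpos : ∀ j, ∀ x ∈ Icc (0:ℝ) 1, 0 ≤ c j x)
    (hb : ∀ α, b α ≤ 0)
    -- `u_j ∈ C²([0,1])`: `u_j' = u' j` and `(c_j u_j')' = w' j`, all continuous on `[0,1]`
    (hu : ∀ j, ∀ x ∈ Icc (0:ℝ) 1, HasDerivAt (u j) (u' j x) x)
    (hu' : ∀ j, ContinuousOn (u' j) (Icc (0:ℝ) 1))
    (hw : ∀ j, ∀ x ∈ Icc (0:ℝ) 1, HasDerivAt (fun y => c j y * u' j y) (w' j x) x)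
    (hw' : ∀ j, ContinuousOn (w' j) (Icc (0:ℝ) 1))
    -- vertex-continuity conditions for `(u,d)`
    (hud0 : ∀ j, u j 0 = d (e₀ j)) (hud1 : ∀ j, u j 1 = d (e₁ j)) :
    (∑ j, ∫ x in (0:ℝ)..1, w' j x * u j x)
      + ∑ α, ((∑ j, ((if e₀ j = α then (1:ℝ) else 0) * (c j 0 * u' j 0)
            - (if e₁ j = α then (1:ℝ) else 0) * (c j 1 * u' j 1))) + b α * d α) * d α
      = -(∑ j, ∫ x in (0:ℝ)..1, c j x * (u' j x) ^ 2) + ∑ α, b α * d α ^ 2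
    ∧ -(∑ j, ∫ x in (0:ℝ)..1, c j x * (u' j x) ^ 2) + ∑ α, b α * d α ^ 2 ≤ 0 :=
  statement2_general m n e₀ e₁ c u u' w' b d hcpos hb hu hu' hw hw' hud0 hud1
end

section
/- For every d ∈ ℝⁿ and every square-integrable η : [−r,0] → ℝⁿ, the map t ↦ T_t d + T₀(t)η is continuous from [0,∞) into L²([−r,0];ℝⁿ); in particular, as t → 0⁺ one has ‖T_t d + T₀(t)η − η‖_{L²([−r,0];ℝⁿ)} → 0 (at t = 0 the value of the map, as an L² class, is η). -/
open MeasureTheory Set Filter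

/-- `e^{sB}` as an operator on Euclidean space `ℝⁿ`, for `B = diag b`. -/
noncomputable def expB {n : ℕ} (b : Fin n → ℝ) (s : ℝ) :
    EuclideanSpace ℝ (Fin n) →L[ℝ] EuclideanSpace ℝ (Fin n) :=
  Matrix.toEuclideanCLM (𝕜 := ℝ) (NormedSpace.exp (s • Matrix.diagonal b))

/-- The nilpotent left-shift operator: `(T₀(t)η)(θ) = η(t+θ)` if `t+θ ≤ 0`, else `0`. -/
noncomputable def shiftT0 {n : ℕ} (t : ℝ) (η : ℝ → EuclideanSpace ℝ (Fin n)) :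
    ℝ → EuclideanSpace ℝ (Fin n) :=
  fun θ => if t + θ ≤ 0 then η (t + θ) else 0

/-- The boundary-delay flow: `(T_t d)(θ) = e^{(t+θ)B} d` if `-t < θ`, else `0`. -/
noncomputable def delayT {n : ℕ} (b : Fin n → ℝ) (t : ℝ) (d : EuclideanSpace ℝ (Fin n)) :
    ℝ → EuclideanSpace ℝ (Fin n) :=
  fun θ => if -t < θ then expB b (t + θ) d else 0

open Topology

/-!
Write the increment `(T_t d + T₀(t)η) - (T_{t₀} d + T₀(t₀)η)` as the sum of the increments of the
two terms and use `‖x + y‖² ≤ 2‖x‖² + 2‖y‖²`. For `θ ≤ 0` the values `T_t d θ` stay bounded for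
`t` near `t₀` and converge as `t → t₀` except at `θ = -t₀`, so dominated convergence handles the
first term. For `t ≥ 0`, `T₀(t)η` agrees on `[-r, 0]` with the translate by `t` of the extension of
`η` by zero, so the second term is controlled by the continuity of translation in `L²(ℝ)`.
-/

theorem MeasureTheory.MemLp.integral_norm_sq_eq {α E : Type*} [MeasurableSpace α]
    [NormedAddCommGroup E] {μ : Measure α} {f : α → E} (hf : MemLp f 2 μ) :
    ∫ a, ‖f a‖ ^ 2 ∂μ = (eLpNorm f 2 μ).toReal ^ 2 := by
  have h0 : 0 ≤ ∫ a, ‖f a‖ ^ 2 ∂μ := integral_nonneg fun a => by positivity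
  rw [hf.eLpNorm_eq_integral_rpow_norm two_ne_zero ENNReal.ofNat_ne_top]
  norm_num [Real.rpow_natCast]
  rw [ENNReal.toReal_ofReal (Real.rpow_nonneg h0 _), ← Real.rpow_natCast, ← Real.rpow_mul h0]
  norm_num

theorem tendsto_integral_norm_sq_comp_add_right_sub {E : Type*} [NormedAddCommGroup E]
    {f : ℝ → E} (hf : MemLp f 2 volume) (t₀ : ℝ) :
    Tendsto (fun t => ∫ x, ‖f (x + t) - f (x + t₀)‖ ^ 2) (𝓝 t₀) (𝓝 0) := by
  let shift : ℝ → C(ℝ, ℝ) := fun t => ⟨(· + t), continuous_add_const t⟩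
  have hshift : Continuous shift :=
    ContinuousMap.continuous_of_continuous_uncurry _ (continuous_snd.add continuous_fst)
  have hmp : ∀ t, MeasurePreserving (shift t) volume volume := fun t =>
    measurePreserving_add_right volume t
  let F : ℝ → Lp E 2 volume := fun t => Lp.compMeasurePreserving (shift t) (hmp t) (hf.toLp f)
  have hF : Continuous F := continuous_const.compMeasurePreservingLp hshift hmp (by norm_num)
  have hF_ae : ∀ t, F t =ᵐ[volume] fun x => f (x + t) := fun t =>
    (Lp.coeFn_compMeasurePreserving _ (hmp t)).trans
      ((hmp t).quasiMeasurePreserving.ae_eq_comp hf.coeFn_toLp)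
  have hdist_sq : Tendsto (fun t => dist (F t) (F t₀) ^ 2) (𝓝 t₀) (𝓝 0) := by
    simpa using (tendsto_iff_dist_tendsto_zero.1 (hF.tendsto t₀)).pow 2
  refine hdist_sq.congr fun t => ?_
  have hmem : MemLp (fun x => f (x + t) - f (x + t₀)) 2 volume :=
    (hf.comp_measurePreserving (hmp t)).sub (hf.comp_measurePreserving (hmp t₀))
  rw [hmem.integral_norm_sq_eq, dist_edist, Lp.edist_def,
    eLpNorm_congr_ae ((hF_ae t).sub (hF_ae t₀))]
  rfl

theorem tendsto_integral_norm_sq_add {ι α E : Type*} [MeasurableSpace α] [NormedAddCommGroup E]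
    {μ : Measure α} {l : Filter ι} {F G : ι → α → E}
    (hF : ∀ᶠ i in l, MemLp (F i) 2 μ) (hG : ∀ᶠ i in l, MemLp (G i) 2 μ)
    (hF₀ : Tendsto (fun i => ∫ a, ‖F i a‖ ^ 2 ∂μ) l (𝓝 0))
    (hG₀ : Tendsto (fun i => ∫ a, ‖G i a‖ ^ 2 ∂μ) l (𝓝 0)) :
    Tendsto (fun i => ∫ a, ‖F i a + G i a‖ ^ 2 ∂μ) l (𝓝 0) := by
  have hsum : Tendsto (fun i => 2 * ∫ a, ‖F i a‖ ^ 2 ∂μ + 2 * ∫ a, ‖G i a‖ ^ 2 ∂μ) l (𝓝 0) := by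
    simpa using (hF₀.const_mul 2).add (hG₀.const_mul 2)
  refine tendsto_of_tendsto_of_tendsto_of_le_of_le' tendsto_const_nhds hsum
    (.of_forall fun i => integral_nonneg fun a => by positivity) ?_
  filter_upwards [hF, hG] with i hFi hGi
  have hFi' := hFi.integrable_norm_pow two_ne_zero
  have hGi' := hGi.integrable_norm_pow two_ne_zero
  rw [← integral_const_mul, ← integral_const_mul, ← integral_add (hFi'.const_mul 2)
    (hGi'.const_mul 2)]
  refine integral_mono_of_nonneg (.of_forall fun a => by positivity)
    ((hFi'.const_mul 2).add (hGi'.const_mul 2)) (.of_forall fun a => ?_)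
  nlinarith [norm_add_le (F i a) (G i a), norm_nonneg (F i a + G i a), sq_nonneg (‖F i a‖ - ‖G i a‖)]

section Delay

variable {n : ℕ} (b : Fin n → ℝ) (d : EuclideanSpace ℝ (Fin n))

theorem expB_apply (s : ℝ) (i : Fin n) : expB b s d i = Real.exp (s * b i) * d i := by
  have hexp : NormedSpace.exp (s • Matrix.diagonal b)
      = Matrix.diagonal fun i => Real.exp (s * b i) := by
    rw [← Matrix.diagonal_smul, Matrix.exp_diagonal]
    congr 1
    funext i
    exact (Pi.coe_exp _ i).trans (congrFun Real.exp_eq_exp_ℝ _).symm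
  simp [expB, hexp, Matrix.mulVec_diagonal]

theorem continuous_expB_apply : Continuous fun s => expB b s d := by
  have h : (fun s => expB b s d) = fun s => WithLp.toLp 2 fun i => Real.exp (s * b i) * d i := by
    funext s
    ext i
    exact expB_apply b d s i
  rw [h]
  exact PiLp.continuous_toLp 2 _ |>.comp <| by fun_prop

theorem delayT_eq_indicator (t : ℝ) :
    delayT b t d = (Ioi (-t)).indicator fun θ => expB b (t + θ) d := by
  funext θ
  simp [delayT, indicator]

theorem measurable_delayT (t : ℝ) : Measurable (delayT b t d) := by
  rw [delayT_eq_indicator]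
  exact ((continuous_expB_apply b d).comp (continuous_const_add t)).measurable.indicator
    measurableSet_Ioi

/-- On `θ ≤ 0` only the values `e^{sB} d` with `0 < s ≤ t` enter into `T_t d`. -/
theorem exists_norm_delayT_le (T : ℝ) :
    ∃ C, ∀ t ≤ T, ∀ θ ≤ 0, ‖delayT b t d θ‖ ≤ C := by
  obtain ⟨C, hC⟩ := isCompact_Icc.exists_bound_of_continuousOn
    (continuous_expB_apply b d).continuousOn (s := Icc 0 T)
  refine ⟨max C 0, fun t ht θ hθ => ?_⟩
  by_cases hθt : -t < θ
  · simp only [delayT, if_pos hθt]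
    exact le_max_of_le_left (hC _ ⟨by linarith, by linarith⟩)
  · simp [delayT, if_neg hθt]

theorem memLp_delayT (p : ENNReal) (r t : ℝ) :
    MemLp (delayT b t d) p (volume.restrict (Icc (-r) 0)) := by
  obtain ⟨C, hC⟩ := exists_norm_delayT_le b d t
  exact .of_bound (measurable_delayT b d t).aestronglyMeasurable C <|
    ae_restrict_of_forall_mem measurableSet_Icc fun θ hθ => hC t le_rfl θ hθ.2

theorem tendsto_delayT_apply {t₀ θ : ℝ} (hθ : θ ≠ -t₀) :
    Tendsto (fun t => delayT b t d θ) (𝓝 t₀) (𝓝 (delayT b t₀ d θ)) := by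
  rcases hθ.lt_or_gt with hlt | hgt
  · have hzero : ∀ᶠ t in 𝓝 t₀, delayT b t₀ d θ = delayT b t d θ := by
      filter_upwards [eventually_lt_nhds (by linarith : t₀ < -θ)] with t ht
      simp [delayT, show ¬ -t < θ by linarith, show ¬ -t₀ < θ by linarith]
    exact tendsto_const_nhds.congr' hzero
  · have hexp : ∀ᶠ t in 𝓝 t₀, expB b (t + θ) d = delayT b t d θ := by
      filter_upwards [eventually_gt_nhds (by linarith : -θ < t₀)] with t ht
      simp [delayT, show -t < θ by linarith]
    rw [← hexp.self_of_nhds]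
    exact ((continuous_expB_apply b d).comp (continuous_add_const θ)).continuousAt.congr' hexp

theorem tendsto_integral_norm_sq_delayT_sub (r t₀ : ℝ) :
    Tendsto (fun t => ∫ θ in Icc (-r) 0, ‖delayT b t d θ - delayT b t₀ d θ‖ ^ 2)
      (𝓝 t₀) (𝓝 0) := by
  obtain ⟨C, hC⟩ := exists_norm_delayT_le b d (t₀ + 1)
  have hmeas : ∀ t, AEStronglyMeasurable (fun θ => ‖delayT b t d θ - delayT b t₀ d θ‖ ^ 2)
      (volume.restrict (Icc (-r) 0)) := fun t =>
    ((measurable_delayT b d t).sub (measurable_delayT b d t₀)).norm.pow_const 2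
      |>.aestronglyMeasurable
  have hbound : ∀ᶠ t in 𝓝 t₀, ∀ᵐ θ ∂volume.restrict (Icc (-r) 0),
      ‖‖delayT b t d θ - delayT b t₀ d θ‖ ^ 2‖ ≤ (2 * C) ^ 2 := by
    filter_upwards [eventually_le_nhds (lt_add_one t₀)] with t ht
    refine ae_restrict_of_forall_mem measurableSet_Icc fun θ hθ => ?_
    rw [norm_pow, norm_norm]
    gcongr
    calc ‖delayT b t d θ - delayT b t₀ d θ‖
        ≤ ‖delayT b t d θ‖ + ‖delayT b t₀ d θ‖ := norm_sub_le _ _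
      _ ≤ 2 * C := by linarith [hC t ht θ hθ.2, hC t₀ (by linarith) θ hθ.2]
  have hlim : ∀ᵐ θ ∂volume.restrict (Icc (-r) 0),
      Tendsto (fun t => ‖delayT b t d θ - delayT b t₀ d θ‖ ^ 2) (𝓝 t₀) (𝓝 0) := by
    filter_upwards [ae_restrict_of_ae ((countable_singleton (-t₀)).ae_notMem volume)] with θ hθ
    simpa using ((tendsto_delayT_apply b d hθ).sub_const (delayT b t₀ d θ)).norm.pow 2
  simpa using tendsto_integral_filter_of_dominated_convergence _
    (.of_forall hmeas) hbound (integrable_const _) hlim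

end Delay

section Shift

variable {n : ℕ} {r : ℝ} {η : ℝ → EuclideanSpace ℝ (Fin n)}

theorem shiftT0_eq_indicator_comp_add {t θ : ℝ} (ht : 0 ≤ t) (hθ : -r ≤ θ) :
    shiftT0 t η θ = (Icc (-r) 0).indicator η (θ + t) := by
  by_cases h : t + θ ≤ 0
  · have hmem : θ + t ∈ Icc (-r) 0 := ⟨by linarith, by linarith⟩
    rw [shiftT0, if_pos h, indicator_of_mem hmem, add_comm]
  · rw [shiftT0, if_neg h, indicator_of_notMem fun hmem => h (by linarith [hmem.2])]

theorem memLp_shiftT0 (hη : MemLp η 2 (volume.restrict (Icc (-r) 0))) {t : ℝ} (ht : 0 ≤ t) :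
    MemLp (shiftT0 t η) 2 (volume.restrict (Icc (-r) 0)) := by
  have hY : MemLp ((Icc (-r) 0).indicator η) 2 volume :=
    (memLp_indicator_iff_restrict measurableSet_Icc).2 hη
  refine ((hY.comp_measurePreserving (measurePreserving_add_right volume t)).restrict _).ae_eq ?_
  exact ae_restrict_of_forall_mem measurableSet_Icc fun θ hθ =>
    (shiftT0_eq_indicator_comp_add ht hθ.1).symm

theorem tendsto_integral_norm_sq_shiftT0_sub (hη : MemLp η 2 (volume.restrict (Icc (-r) 0)))
    {t₀ : ℝ} (ht₀ : 0 ≤ t₀) :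
    Tendsto (fun t => ∫ θ in Icc (-r) 0, ‖shiftT0 t η θ - shiftT0 t₀ η θ‖ ^ 2)
      (𝓝[Ici 0] t₀) (𝓝 0) := by
  set Y := (Icc (-r) 0).indicator η
  have hY : MemLp Y 2 volume := (memLp_indicator_iff_restrict measurableSet_Icc).2 hη
  have hmp : ∀ t : ℝ, MeasurePreserving (· + t) volume volume := measurePreserving_add_right volume
  refine tendsto_of_tendsto_of_tendsto_of_le_of_le' tendsto_const_nhds
    ((tendsto_integral_norm_sq_comp_add_right_sub hY t₀).mono_left nhdsWithin_le_nhds)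
    (.of_forall fun t => integral_nonneg fun θ => by positivity) ?_
  filter_upwards [self_mem_nhdsWithin] with t (ht : 0 ≤ t)
  calc ∫ θ in Icc (-r) 0, ‖shiftT0 t η θ - shiftT0 t₀ η θ‖ ^ 2
      = ∫ θ in Icc (-r) 0, ‖Y (θ + t) - Y (θ + t₀)‖ ^ 2 :=
        setIntegral_congr_fun measurableSet_Icc fun θ hθ => by
          rw [shiftT0_eq_indicator_comp_add ht hθ.1, shiftT0_eq_indicator_comp_add ht₀ hθ.1]
    _ ≤ ∫ θ, ‖Y (θ + t) - Y (θ + t₀)‖ ^ 2 :=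
        setIntegral_le_integral
          (((hY.comp_measurePreserving (hmp t)).sub
            (hY.comp_measurePreserving (hmp t₀))).integrable_norm_pow two_ne_zero)
          (.of_forall fun θ => by positivity)

end Shift

theorem statement4_general
    (r : ℝ) (n : ℕ) (b : Fin n → ℝ)
    (d : EuclideanSpace ℝ (Fin n)) (η : ℝ → EuclideanSpace ℝ (Fin n))
    (hη : Measurable η)
    (hη2 : IntegrableOn (fun θ => ‖η θ‖ ^ 2) (Icc (-r) 0)) :
    (∀ t₀ ∈ Ici (0:ℝ),
      Tendsto (fun t => ∫ θ in Icc (-r) 0,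
          ‖(delayT b t d θ + shiftT0 t η θ) - (delayT b t₀ d θ + shiftT0 t₀ η θ)‖ ^ 2)
        (nhdsWithin t₀ (Ici 0)) (nhds 0))
    ∧ Tendsto (fun t => ∫ θ in Icc (-r) 0,
          ‖(delayT b t d θ + shiftT0 t η θ) - η θ‖ ^ 2)
        (nhdsWithin 0 (Ioi 0)) (nhds 0) := by
  have hηL2 : MemLp η 2 (volume.restrict (Icc (-r) 0)) :=
    (memLp_two_iff_integrable_sq_norm hη.aestronglyMeasurable).2 hη2
  have hcont : ∀ t₀ ∈ Ici (0:ℝ), Tendsto (fun t => ∫ θ in Icc (-r) 0,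
      ‖(delayT b t d θ + shiftT0 t η θ) - (delayT b t₀ d θ + shiftT0 t₀ η θ)‖ ^ 2)
      (𝓝[Ici 0] t₀) (𝓝 0) := fun t₀ ht₀ => by
    simp_rw [add_sub_add_comm]
    exact tendsto_integral_norm_sq_add
      (.of_forall fun t => (memLp_delayT b d 2 r t).sub (memLp_delayT b d 2 r t₀))
      (eventually_nhdsWithin_of_forall fun t ht =>
        (memLp_shiftT0 hηL2 ht).sub (memLp_shiftT0 hηL2 ht₀))
      ((tendsto_integral_norm_sq_delayT_sub b d r t₀).mono_left nhdsWithin_le_nhds)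
      (tendsto_integral_norm_sq_shiftT0_sub hηL2 ht₀)
  refine ⟨hcont, ((hcont 0 self_mem_Ici).mono_left (nhdsWithin_mono _ Ioi_subset_Ici_self)).congr
    fun t => setIntegral_congr_fun measurableSet_Icc fun θ hθ => ?_⟩
  simp [delayT, shiftT0, hθ.2, not_lt.2 hθ.2]

/-- For every `d ∈ ℝⁿ` and every square-integrable `η : [-r,0] → ℝⁿ`, the
map `t ↦ T_t d + T₀(t)η` is continuous from `[0,∞)` into `L²([-r,0];ℝⁿ)` (continuity being
expressed by the vanishing of the squared `L²` distance); in particular, as `t → 0⁺`,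
`‖T_t d + T₀(t)η - η‖_{L²([-r,0];ℝⁿ)} → 0` (at `t = 0` the value, as an `L²` class, is `η`). -/
theorem statement4
    (r : ℝ) (hr : 0 < r) (n : ℕ) (b : Fin n → ℝ)
    (d : EuclideanSpace ℝ (Fin n)) (η : ℝ → EuclideanSpace ℝ (Fin n))
    (hη : Measurable η)
    (hη2 : IntegrableOn (fun θ => ‖η θ‖ ^ 2) (Icc (-r) 0)) :
    (∀ t₀ ∈ Ici (0:ℝ),
      Tendsto (fun t => ∫ θ in Icc (-r) 0,
          ‖(delayT b t d θ + shiftT0 t η θ) - (delayT b t₀ d θ + shiftT0 t₀ η θ)‖ ^ 2)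
        (nhdsWithin t₀ (Ici 0)) (nhds 0))
    ∧ Tendsto (fun t => ∫ θ in Icc (-r) 0,
          ‖(delayT b t d θ + shiftT0 t η θ) - η θ‖ ^ 2)
        (nhdsWithin 0 (Ioi 0)) (nhds 0) :=
  statement4_general r n b d η hη hη2
end

section
/- The solution of the resolvent equation is unique: let λ ∈ ℂ, d ∈ ℂⁿ, and let ζ : [−r,0] → ℂⁿ be Lebesgue integrable. If η : [−r,0] → ℂⁿ is absolutely continuous in the sense that there is an integrable g : [−r,0] → ℂⁿ with η(θ) = d − ∫_θ^0 g(s) ds for all θ ∈ [−r,0], and g(θ) = λ η(θ) − ζ(θ) for almost every θ, then η(θ) = e^{λθ} (d + ∫_θ^0 e^{−λs} ζ(s) ds) for all θ ∈ [−r,0]. -/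
/-! Put `η̃ s = d - ∫_s^0 g`, which is absolutely continuous with `η̃' = g = λ η̃ - ζ` almost
everywhere. Then `F s = e^{-λs} η̃ s - ∫_s^0 e^{-λu} ζ u du` is absolutely continuous with
`F' = e^{-λs} (g - λ η̃ + ζ) = 0` almost everywhere, so it is constant, equal to `F 0 = d`. -/

open MeasureTheory Set Filter intervalIntegral

namespace AbsolutelyContinuousOnInterval

variable {X Y : Type*} [PseudoMetricSpace X] [PseudoMetricSpace Y] {f : ℝ → X} {g : ℝ → Y}
  {a b : ℝ}

theorem of_dist_le (hg : AbsolutelyContinuousOnInterval g a b)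
    (h : ∀ x ∈ uIcc a b, ∀ y ∈ uIcc a b, dist (f x) (f y) ≤ dist (g x) (g y)) :
    AbsolutelyContinuousOnInterval f a b := by
  refine squeeze_zero' (.of_forall fun _ ↦ Finset.sum_nonneg fun _ _ ↦ dist_nonneg) ?_ hg
  filter_upwards [eventually_inf_principal.mpr (.of_forall fun _ h ↦ h)] with E hE
  exact Finset.sum_le_sum fun i hi ↦ h _ (hE.1 i hi).1 _ (hE.1 i hi).2

end AbsolutelyContinuousOnInterval

theorem IntervalIntegrable.absolutelyContinuousOnInterval_integral {E : Type*}
    [NormedAddCommGroup E] [NormedSpace ℝ E] [CompleteSpace E] {f : ℝ → E} {a b c : ℝ}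
    (hf : IntervalIntegrable f volume a b) (hc : c ∈ uIcc a b) :
    AbsolutelyContinuousOnInterval (fun x ↦ ∫ t in c..x, f t) a b := by
  refine (hf.norm.absolutelyContinuousOnInterval_intervalIntegral hc).of_dist_le
    fun x hx y hy ↦ ?_
  have hcx : IntervalIntegrable f volume c x := hf.mono_set (uIcc_subset_uIcc hc hx)
  have hcy : IntervalIntegrable f volume c y := hf.mono_set (uIcc_subset_uIcc hc hy)
  rw [dist_eq_norm, dist_eq_norm, Real.norm_eq_abs, integral_interval_sub_left hcx hcy,
    integral_interval_sub_left hcx.norm hcy.norm]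
  exact norm_integral_le_abs_integral_norm

variable {E : Type*} [NormedAddCommGroup E] [NormedSpace ℂ E] [CompleteSpace E]

theorem exp_neg_smul_eq_of_ae_eq {lam : ℂ} {d : E} {ζ g : ℝ → E} {θ : ℝ}
    (hζ : IntervalIntegrable ζ volume θ 0) (hg : IntervalIntegrable g volume θ 0)
    (hge : ∀ᵐ s, s ∈ uIcc θ 0 → g s = lam • (d - ∫ u in s..0, g u) - ζ s) :
    Complex.exp (-lam * θ) • (d - ∫ s in θ..0, g s) =
      d + ∫ s in θ..0, Complex.exp (-lam * s) • ζ s := by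
  set e : ℝ → ℂ := fun s ↦ Complex.exp (-lam * s)
  have he : ∀ x, HasDerivAt e (-lam * e x) x := fun x ↦ by
    simpa [e, mul_comm] using ((hasDerivAt_id (x : ℂ)).const_mul (-lam)).cexp.comp_ofReal
  have heζ : IntervalIntegrable (fun s ↦ e s • ζ s) volume θ 0 :=
    hζ.continuousOn_smul (fun x _ ↦ (he x).continuousAt.continuousWithinAt)
  have h0 : (0 : ℝ) ∈ uIcc θ 0 := right_mem_uIcc
  set F : ℝ → E := fun s ↦ e s • (d + ∫ u in 0..s, g u) + ∫ u in 0..s, e u • ζ u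
  have hac_e : AbsolutelyContinuousOnInterval e θ 0 :=
    (Complex.contDiff_exp.comp (contDiff_const.mul Complex.ofRealCLM.contDiff)).contDiffOn
      |>.absolutelyContinuousOnInterval
  have hac_η : AbsolutelyContinuousOnInterval (fun s ↦ d + ∫ u in 0..s, g u) θ 0 :=
    contDiffOn_const.absolutelyContinuousOnInterval.fun_add
      (hg.absolutelyContinuousOnInterval_integral h0)
  have hac : AbsolutelyContinuousOnInterval F θ 0 :=
    (hac_e.fun_smul hac_η).fun_add (heζ.absolutelyContinuousOnInterval_integral h0)
  have hderiv : ∀ᵐ x, x ∈ uIcc θ 0 → HasDerivAt F 0 x := by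
    filter_upwards [hg.ae_hasDerivAt_integral, heζ.ae_hasDerivAt_integral, hge]
      with x hgx hζx hgex hx
    refine HasDerivAt.congr_deriv (f := F)
      (((he x).smul ((hgx hx 0 h0).const_add d)).add (hζx hx 0 h0)) ?_
    rw [hgex hx, integral_symm 0 x, sub_neg_eq_add, smul_sub, smul_smul, neg_mul, neg_smul,
      mul_comm lam]
    abel
  obtain ⟨C, hC⟩ := hac.const_of_ae_hasDerivAt_zero hderiv
  have hF : F θ = F 0 := (hC θ left_mem_uIcc).trans (hC 0 h0).symm
  simp only [F, e, integral_same, Complex.ofReal_zero, mul_zero, Complex.exp_zero, add_zero,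
    one_smul] at hF
  rw [integral_symm 0 θ, integral_symm 0 θ, sub_neg_eq_add]
  exact eq_add_neg_of_add_eq hF

theorem statement6_general
    (r : ℝ) (n : ℕ) (lam : ℂ)
    (d : Fin n → ℂ) (ζ g η : ℝ → Fin n → ℂ)
    (hζ : IntegrableOn ζ (Icc (-r) 0))
    (hg : IntegrableOn g (Icc (-r) 0))
    (hη : ∀ θ ∈ Icc (-r) 0, η θ = d - ∫ s in θ..(0:ℝ), g s)
    (hge : ∀ᵐ θ : ℝ ∂(volume.restrict (Icc (-r) 0)), g θ = lam • η θ - ζ θ) :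
    ∀ θ ∈ Icc (-r) 0,
      η θ = Complex.exp (lam * θ) • (d + ∫ s in θ..(0:ℝ), Complex.exp (-lam * s) • ζ s) := by
  intro θ hθ
  have hsub : uIcc θ 0 ⊆ Icc (-r) 0 := by
    rw [uIcc_of_le hθ.2]
    exact Icc_subset_Icc_left hθ.1
  have hge' : ∀ᵐ s, s ∈ uIcc θ 0 → g s = lam • (d - ∫ u in s..0, g u) - ζ s := by
    filter_upwards [(ae_restrict_iff' measurableSet_Icc).1 hge] with s hs hsθ
    rw [hs (hsub hsθ), hη s (hsub hsθ)]
  rw [hη θ hθ, ← exp_neg_smul_eq_of_ae_eq (hζ.mono_set hsub).intervalIntegrable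
    (hg.mono_set hsub).intervalIntegrable hge', smul_smul, ← Complex.exp_add, neg_mul,
    add_neg_cancel, Complex.exp_zero, one_smul]

/-- Uniqueness for the resolvent equation: let `λ ∈ ℂ`, `d ∈ ℂⁿ`, and let
`ζ : [-r,0] → ℂⁿ` be Lebesgue integrable.  If `η : [-r,0] → ℂⁿ` is absolutely continuous in
the sense that there is an integrable `g` with `η(θ) = d - ∫_θ^0 g(s) ds` for all
`θ ∈ [-r,0]`, and `g(θ) = λ η(θ) - ζ(θ)` for almost every `θ`, then
`η(θ) = e^{λθ} (d + ∫_θ^0 e^{-λs} ζ(s) ds)` for all `θ ∈ [-r,0]`. -/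
theorem statement6
    (r : ℝ) (hr : 0 < r) (n : ℕ) (lam : ℂ)
    (d : Fin n → ℂ) (ζ g η : ℝ → Fin n → ℂ)
    (hζ : IntegrableOn ζ (Icc (-r) 0))
    (hg : IntegrableOn g (Icc (-r) 0))
    (hη : ∀ θ ∈ Icc (-r) 0, η θ = d - ∫ s in θ..(0:ℝ), g s)
    (hge : ∀ᵐ θ : ℝ ∂(volume.restrict (Icc (-r) 0)), g θ = lam • η θ - ζ θ) :
    ∀ θ ∈ Icc (-r) 0,
      η θ = Complex.exp (lam * θ) • (d + ∫ s in θ..(0:ℝ), Complex.exp (-lam * s) • ζ s) :=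
  statement6_general r n lam d ζ g η hζ hg hη hge
end

section
/- History-term estimate: let ν be a finite Borel measure on [−r,0], let η : [−r,0] → ℝⁿ be measurable and square-integrable, and let 0 ≤ t ≤ r. Then ∫₀^t ( ∫_{[−r,−s]} ‖η(s+θ)‖ dν(θ) ) ds ≤ √t · ‖η‖_{L²([−r,0];ℝⁿ)} · ν([−r,0]). -/
/-!
Extend `η` by zero outside `[-r, 0]` to a function `h ∈ L²(ℝ)`; for `s ≥ 0` and `θ ∈ [-r, -s]`
the integrand is `‖h (s + θ)‖`, and enlarging the `θ`-window to `[-r, 0]` only increases it.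
After exchanging the order of integration (Tonelli), each slice `∫₀ᵗ ‖h (s + θ)‖ ds` is at most
`√t ‖h‖_{L²}` by Cauchy–Schwarz and translation invariance of Lebesgue measure, and integrating
this bound in `θ` against `ν` produces the factor `ν([-r, 0])`.
-/

open MeasureTheory Set
open scoped ENNReal

section

variable {E : Type*} [NormedAddCommGroup E]

theorem toReal_eLpNorm_two_eq_sqrt_integral {α : Type*} {m : MeasurableSpace α}
    {μ : Measure α} {f : α → E} (hf : AEStronglyMeasurable f μ) :
    (eLpNorm f 2 μ).toReal = √(∫ x, ‖f x‖ ^ 2 ∂μ) := by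
  rw [toReal_eLpNorm hf, show (2 : ℝ≥0∞) = ((2 : NNReal) : ℝ≥0∞) from rfl,
    lpNorm_nnreal_eq_integral_norm_rpow two_ne_zero hf, Real.sqrt_eq_rpow]
  norm_num

theorem setLIntegral_enorm_le_sqrt_measure_mul_eLpNorm_two {α : Type*} {m : MeasurableSpace α}
    {μ : Measure α} {f : α → E} (hf : AEStronglyMeasurable f μ) (s : Set α) :
    ∫⁻ x in s, ‖f x‖ₑ ∂μ ≤ μ s ^ (1 / 2 : ℝ) * eLpNorm f 2 μ := by
  have hHolder := eLpNorm_le_eLpNorm_mul_rpow_measure_univ (p := 1) (q := 2) one_le_two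
    (hf.restrict : AEStronglyMeasurable f (μ.restrict s))
  rw [eLpNorm_one_eq_lintegral_enorm (f := f), Measure.restrict_apply_univ] at hHolder
  calc ∫⁻ x in s, ‖f x‖ₑ ∂μ ≤ μ s ^ (1 / 2 : ℝ) * eLpNorm f 2 (μ.restrict s) := by
        norm_num [mul_comm] at hHolder ⊢; exact hHolder
    _ ≤ μ s ^ (1 / 2 : ℝ) * eLpNorm f 2 μ := by gcongr; exact Measure.restrict_le_self

theorem setLIntegral_enorm_comp_add_right_le {f : ℝ → E} (hf : AEStronglyMeasurable f)
    (s : Set ℝ) (θ : ℝ) :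
    ∫⁻ x in s, ‖f (x + θ)‖ₑ ≤ volume s ^ (1 / 2 : ℝ) * eLpNorm f 2 volume := by
  have hθ := measurePreserving_add_right volume θ
  rw [← eLpNorm_comp_measurePreserving hf hθ]
  exact setLIntegral_enorm_le_sqrt_measure_mul_eLpNorm_two (hf.comp_measurePreserving hθ) s

theorem lintegral_setLIntegral_enorm_comp_add_le (ν : Measure ℝ) [SFinite ν] {f : ℝ → E}
    (hf : StronglyMeasurable f) (A B : Set ℝ) :
    ∫⁻ s in A, ∫⁻ θ in B, ‖f (s + θ)‖ₑ ∂ν ≤ volume A ^ (1 / 2 : ℝ) * eLpNorm f 2 volume * ν B := by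
  have hmeas : Measurable fun p : ℝ × ℝ => ‖f (p.1 + p.2)‖ₑ :=
    (hf.comp_measurable (measurable_fst.add measurable_snd)).enorm
  rw [lintegral_lintegral_swap hmeas.aemeasurable, ← setLIntegral_const]
  exact lintegral_mono fun θ => setLIntegral_enorm_comp_add_right_le hf.aestronglyMeasurable A θ

theorem lintegral_Ioc_setLIntegral_Icc_enorm_comp_add_le (ν : Measure ℝ) [SFinite ν]
    {η : ℝ → E} (hη : StronglyMeasurable η) {r t : ℝ} (ht : 0 ≤ t) :
    ∫⁻ s in Ioc 0 t, ∫⁻ θ in Icc (-r) (-s), ‖η (s + θ)‖ₑ ∂ν ≤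
      ENNReal.ofReal √t * eLpNorm η 2 (volume.restrict (Icc (-r) 0)) * ν (Icc (-r) 0) := by
  set h := (Icc (-r) 0).indicator η with h_def
  have hwindow : ∀ s ∈ Ioc 0 t, ∫⁻ θ in Icc (-r) (-s), ‖η (s + θ)‖ₑ ∂ν ≤
      ∫⁻ θ in Icc (-r) 0, ‖h (s + θ)‖ₑ ∂ν := by
    intro s hs
    calc ∫⁻ θ in Icc (-r) (-s), ‖η (s + θ)‖ₑ ∂ν = ∫⁻ θ in Icc (-r) (-s), ‖h (s + θ)‖ₑ ∂ν := by
          refine setLIntegral_congr_fun measurableSet_Icc fun θ hθ => ?_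
          have hmem : s + θ ∈ Icc (-r) 0 := ⟨by linarith [hθ.1, hs.1], by linarith [hθ.2]⟩
          rw [h_def, indicator_of_mem hmem]
      _ ≤ ∫⁻ θ in Icc (-r) 0, ‖h (s + θ)‖ₑ ∂ν :=
          lintegral_mono_set (Icc_subset_Icc_right (by linarith [hs.1]))
  calc _ ≤ ∫⁻ s in Ioc 0 t, ∫⁻ θ in Icc (-r) 0, ‖h (s + θ)‖ₑ ∂ν :=
        setLIntegral_mono' measurableSet_Ioc hwindow
    _ ≤ _ := lintegral_setLIntegral_enorm_comp_add_le ν (hη.indicator measurableSet_Icc) _ _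
    _ = _ := by
      rw [eLpNorm_indicator_eq_eLpNorm_restrict measurableSet_Icc, Real.volume_Ioc, sub_zero,
        ENNReal.ofReal_rpow_of_nonneg ht (by norm_num), ← Real.sqrt_eq_rpow]

end

theorem statement9_general
    (r : ℝ) (n : ℕ)
    (ν : Measure ℝ) [IsFiniteMeasure ν]
    (η : ℝ → EuclideanSpace ℝ (Fin n))
    (hη : Measurable η)
    (hη2 : IntegrableOn (fun s => ‖η s‖ ^ 2) (Icc (-r) 0))
    (t : ℝ) (ht0 : 0 ≤ t) :
    ∫ s in (0:ℝ)..t, (∫ θ in Icc (-r) (-s), ‖η (s + θ)‖ ∂ν)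
      ≤ Real.sqrt t * Real.sqrt (∫ s in Icc (-r) 0, ‖η s‖ ^ 2) *
          (ν (Icc (-r) 0)).toReal := by
  have hηm := hη.stronglyMeasurable
  have hL2 : MemLp η 2 (volume.restrict (Icc (-r) 0)) :=
    (memLp_two_iff_integrable_sq_norm hηm.aestronglyMeasurable).2 hη2
  set C := ENNReal.ofReal √t * eLpNorm η 2 (volume.restrict (Icc (-r) 0)) * ν (Icc (-r) 0)
  have hC : C ≠ ∞ := by simp [C, ENNReal.mul_eq_top, hL2.eLpNorm_ne_top]
  set I := ∫ s in (0:ℝ)..t, (∫ θ in Icc (-r) (-s), ‖η (s + θ)‖ ∂ν) with hI_def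
  have hI : ‖I‖ₑ ≤ C := by
    rw [hI_def, intervalIntegral.integral_of_le ht0]
    calc _ ≤ ∫⁻ s in Ioc 0 t, ‖∫ θ in Icc (-r) (-s), ‖η (s + θ)‖ ∂ν‖ₑ :=
          enorm_integral_le_lintegral_enorm _
      _ ≤ ∫⁻ s in Ioc 0 t, ∫⁻ θ in Icc (-r) (-s), ‖η (s + θ)‖ₑ ∂ν := lintegral_mono fun s => by
          simpa only [enorm_norm] using enorm_integral_le_lintegral_enorm fun θ => ‖η (s + θ)‖
      _ ≤ C := lintegral_Ioc_setLIntegral_Icc_enorm_comp_add_le ν hηm ht0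
  calc I ≤ ‖I‖ := Real.le_norm_self I
    _ ≤ C.toReal := by rw [← toReal_enorm]; exact ENNReal.toReal_mono hC hI
    _ = _ := by
      rw [ENNReal.toReal_mul, ENNReal.toReal_mul, ENNReal.toReal_ofReal (Real.sqrt_nonneg _),
        toReal_eLpNorm_two_eq_sqrt_integral hηm.aestronglyMeasurable]

/-- history-term estimate.  Let `ν` be a finite Borel measure on `[-r,0]`,
let `η : [-r,0] → ℝⁿ` be measurable and square-integrable, and let `0 ≤ t ≤ r`.  Then
`∫₀^t ( ∫_{[-r,-s]} ‖η(s+θ)‖ dν(θ) ) ds ≤ √t · ‖η‖_{L²([-r,0];ℝⁿ)} · ν([-r,0])`,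
where `‖·‖` is the Euclidean norm on `ℝⁿ`. -/
theorem statement9
    (r : ℝ) (hr : 0 < r) (n : ℕ)
    (ν : Measure ℝ) [IsFiniteMeasure ν]
    (η : ℝ → EuclideanSpace ℝ (Fin n))
    (hη : Measurable η)
    (hη2 : IntegrableOn (fun s => ‖η s‖ ^ 2) (Icc (-r) 0))
    (t : ℝ) (ht0 : 0 ≤ t) (htr : t ≤ r) :
    ∫ s in (0:ℝ)..t, (∫ θ in Icc (-r) (-s), ‖η (s + θ)‖ ∂ν)
      ≤ Real.sqrt t * Real.sqrt (∫ s in Icc (-r) 0, ‖η s‖ ^ 2) *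
          (ν (Icc (-r) 0)).toReal :=
  statement9_general r n ν η hη hη2 t ht0
end

section
/- Miyadera–Voigt-type estimate for the delay operator: for every d ∈ ℝⁿ, every measurable square-integrable η : [−r,0] → ℝⁿ, and every 0 ≤ t ≤ r, ∫₀^t ‖Φ( T_s d + T₀(s)η )‖ ds ≤ ( √t · ‖η‖_{L²([−r,0];ℝⁿ)} + t · K · ‖d‖ ) · |μ|, where Φ is applied to the function θ ↦ (T_s d)(θ) + (T₀(s)η)(θ). -/
/-!
Since `‖Φ ξ‖ ≤ ∫ ‖ξ‖ dμ⁺ + ∫ ‖ξ‖ dμ⁻`, it suffices to bound `∫₀ᵗ ∫_{[-r,0]} ‖T_s d + T₀(s)η‖ dκ ds`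
by `(√t ‖η‖₂ + t K ‖d‖) κ([-r,0])` for each finite measure `κ`. The boundary part is pointwise at
most `K ‖d‖`. For the shift part, exchange the two integrals: for fixed `θ ∈ [-r,0]` the function
`s ↦ (T₀(s)η)(θ)` on `(0,t]` is a piece of a translate of `η` on `[-r,0]`, so Cauchy–Schwarz bounds
its integral by `√t ‖η‖₂`.
-/

open MeasureTheory Set

/-- The delay operator `Φ(ξ) := ∫_{[-r,0]} ξ dμ⁺ - ∫_{[-r,0]} ξ dμ⁻`, where `(μ⁺, μ⁻)` is the
Jordan decomposition of a Borel measure `μ` of bounded variation on `[-r,0]`. -/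
noncomputable def delayPhi {n : ℕ} (r : ℝ) (μp μm : Measure ℝ)
    (ξ : ℝ → EuclideanSpace ℝ (Fin n)) : EuclideanSpace ℝ (Fin n) :=
  (∫ θ in Icc (-r) 0, ξ θ ∂μp) - ∫ θ in Icc (-r) 0, ξ θ ∂μm

open scoped ENNReal

section
variable {n : ℕ}

lemma expB_eq_toEuclideanCLM_diagonal (b : Fin n → ℝ) (s : ℝ) :
    expB b s = Matrix.toEuclideanCLM (𝕜 := ℝ) (Matrix.diagonal fun i => Real.exp (s * b i)) := by
  rw [expB, ← Matrix.diagonal_smul, Matrix.exp_diagonal]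
  congr 2 with i
  simp [← Real.exp_eq_exp_ℝ]

lemma continuous_expB (b : Fin n → ℝ) : Continuous (expB b) := by
  have hCLM : Continuous (Matrix.toEuclideanCLM (n := Fin n) (𝕜 := ℝ)) :=
    LinearMap.continuous_of_finiteDimensional
      (Matrix.toEuclideanCLM (n := Fin n) (𝕜 := ℝ)).toAlgEquiv.toLinearMap
  rw [funext (expB_eq_toEuclideanCLM_diagonal b)]
  exact hCLM.comp (continuous_pi fun i => by fun_prop).matrix_diagonal

lemma norm_expB_le_iSup (b : Fin n → ℝ) {r u : ℝ} (hu : u ∈ Icc 0 r) :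
    ‖expB b u‖ ≤ ⨆ s ∈ Icc (0:ℝ) r, ‖expB b s‖ := by
  obtain ⟨M, hM⟩ := isCompact_Icc.bddAbove_image (continuous_expB b).norm.continuousOn
  have hbdd : BddAbove (range fun s => ⨆ _ : s ∈ Icc (0:ℝ) r, ‖expB b s‖) :=
    ⟨max M 0, forall_mem_range.2 fun s => Real.iSup_le
      (fun hs => (hM (mem_image_of_mem _ hs)).trans (le_max_left _ _)) (le_max_right _ _)⟩
  calc ‖expB b u‖ = ⨆ _ : u ∈ Icc (0:ℝ) r, ‖expB b u‖ :=
      (ciSup_pos (f := fun _ => ‖expB b u‖) hu).symm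
    _ ≤ _ := le_ciSup hbdd u

lemma iSup_norm_expB_nonneg (b : Fin n → ℝ) (r : ℝ) : 0 ≤ ⨆ s ∈ Icc (0:ℝ) r, ‖expB b s‖ :=
  Real.iSup_nonneg fun _ => Real.iSup_nonneg fun _ => norm_nonneg _

lemma norm_delayT_le (b : Fin n → ℝ) (d : EuclideanSpace ℝ (Fin n)) {r s θ : ℝ}
    (hsr : s ≤ r) (hθ : θ ≤ 0) :
    ‖delayT b s d θ‖ ≤ (⨆ u ∈ Icc (0:ℝ) r, ‖expB b u‖) * ‖d‖ := by
  unfold delayT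
  split_ifs with h
  · refine ((expB b _).le_opNorm d).trans ?_
    gcongr
    exact norm_expB_le_iSup b ⟨by linarith, by linarith⟩
  · rw [norm_zero]
    exact mul_nonneg (iSup_norm_expB_nonneg b r) (norm_nonneg d)

lemma measurable_delayT_uncurry (b : Fin n → ℝ) (d : EuclideanSpace ℝ (Fin n)) :
    Measurable fun p : ℝ × ℝ => delayT b p.1 d p.2 := by
  unfold delayT
  refine Measurable.ite (measurableSet_lt measurable_fst.neg measurable_snd) ?_ measurable_const
  exact (((continuous_expB b).clm_apply continuous_const).comp
    (continuous_fst.add continuous_snd)).measurable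

lemma measurable_shiftT0_uncurry {η : ℝ → EuclideanSpace ℝ (Fin n)} (hη : Measurable η) :
    Measurable fun p : ℝ × ℝ => shiftT0 p.1 η p.2 :=
  Measurable.ite (measurableSet_le (measurable_fst.add measurable_snd) measurable_const)
    (hη.comp (measurable_fst.add measurable_snd)) measurable_const

lemma enorm_delayPhi_le (r : ℝ) (μp μm : Measure ℝ) (ξ : ℝ → EuclideanSpace ℝ (Fin n)) :
    ‖delayPhi r μp μm ξ‖ₑ
      ≤ (∫⁻ θ in Icc (-r) 0, ‖ξ θ‖ₑ ∂μp) + ∫⁻ θ in Icc (-r) 0, ‖ξ θ‖ₑ ∂μm :=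
  enorm_sub_le.trans
    (add_le_add (enorm_integral_le_lintegral_enorm _) (enorm_integral_le_lintegral_enorm _))

lemma stronglyMeasurable_delayPhi (r : ℝ) (μp μm : Measure ℝ) [SFinite μp] [SFinite μm]
    {ξ : ℝ → ℝ → EuclideanSpace ℝ (Fin n)} (hξ : Measurable fun p : ℝ × ℝ => ξ p.1 p.2) :
    StronglyMeasurable fun s => delayPhi r μp μm (ξ s) :=
  hξ.stronglyMeasurable.integral_prod_right'.sub hξ.stronglyMeasurable.integral_prod_right'

lemma setLIntegral_enorm_delayPhi_le (r : ℝ) (μp μm : Measure ℝ) [SFinite μp] [SFinite μm]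
    {ξ : ℝ → ℝ → EuclideanSpace ℝ (Fin n)} (hξ : Measurable fun p : ℝ × ℝ => ξ p.1 p.2)
    (A : Set ℝ) :
    ∫⁻ s in A, ‖delayPhi r μp μm (ξ s)‖ₑ
      ≤ (∫⁻ s in A, ∫⁻ θ in Icc (-r) 0, ‖ξ s θ‖ₑ ∂μp)
        + ∫⁻ s in A, ∫⁻ θ in Icc (-r) 0, ‖ξ s θ‖ₑ ∂μm :=
  (lintegral_mono fun s => enorm_delayPhi_le r μp μm (ξ s)).trans_eq
    (lintegral_add_left hξ.enorm.lintegral_prod_right' _)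

lemma lintegral_Ioc_enorm_shiftT0_rpow_two_le {η : ℝ → EuclideanSpace ℝ (Fin n)} {r θ : ℝ}
    (hθ : -r ≤ θ) (t : ℝ) :
    ∫⁻ s in Ioc 0 t, ‖shiftT0 s η θ‖ₑ ^ (2:ℝ) ≤ ∫⁻ u in Icc (-r) 0, ‖η u‖ₑ ^ (2:ℝ) := by
  set G : ℝ → ℝ≥0∞ := (Icc (-r) 0).indicator fun u => ‖η u‖ₑ ^ (2:ℝ)
  have hG : ∀ s ∈ Ioc 0 t, ‖shiftT0 s η θ‖ₑ ^ (2:ℝ) ≤ G (s + θ) := by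
    intro s hs
    by_cases h : s + θ ≤ 0
    · rw [shiftT0, if_pos h]
      exact (indicator_of_mem (show s + θ ∈ Icc (-r) 0 from ⟨by linarith [hs.1], h⟩)
        fun u => ‖η u‖ₑ ^ (2:ℝ)).ge
    · simp [shiftT0, h]
  calc ∫⁻ s in Ioc 0 t, ‖shiftT0 s η θ‖ₑ ^ (2:ℝ)
      ≤ ∫⁻ s in Ioc 0 t, G (s + θ) := setLIntegral_mono' measurableSet_Ioc hG
    _ ≤ ∫⁻ s, G (s + θ) := setLIntegral_le_lintegral _ _
    _ = ∫⁻ u in Icc (-r) 0, ‖η u‖ₑ ^ (2:ℝ) := by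
      rw [lintegral_add_right_eq_self G θ, lintegral_indicator measurableSet_Icc]

lemma lintegral_Ioc_enorm_shiftT0_le {r : ℝ} {η : ℝ → EuclideanSpace ℝ (Fin n)} (hη : Measurable η)
    (hη2 : IntegrableOn (fun s => ‖η s‖ ^ 2) (Icc (-r) 0)) {t θ : ℝ} (ht : 0 ≤ t) (hθ : -r ≤ θ) :
    ∫⁻ s in Ioc 0 t, ‖shiftT0 s η θ‖ₑ
      ≤ ENNReal.ofReal (√t * √(∫ u in Icc (-r) 0, ‖η u‖ ^ 2)) := by
  have hmeas : Measurable fun s => ‖shiftT0 s η θ‖ₑ :=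
    ((measurable_shiftT0_uncurry hη).comp (measurable_id.prodMk measurable_const)).enorm
  have hL2 : ∫⁻ u in Icc (-r) 0, ‖η u‖ₑ ^ (2:ℝ)
      = ENNReal.ofReal (∫ u in Icc (-r) 0, ‖η u‖ ^ 2) := by
    rw [ofReal_integral_eq_lintegral_ofReal hη2 (ae_of_all _ fun _ => sq_nonneg _)]
    simp [← ofReal_norm, ENNReal.ofReal_pow]
  have hCS := ENNReal.lintegral_mul_le_Lp_mul_Lq (volume.restrict (Ioc 0 t))
    Real.HolderConjugate.two_two hmeas.aemeasurable (aemeasurable_const (b := (1 : ℝ≥0∞)))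
  simp only [Pi.mul_apply, mul_one, ENNReal.one_rpow, setLIntegral_const, Real.volume_Ioc,
    sub_zero, one_mul] at hCS
  calc ∫⁻ s in Ioc 0 t, ‖shiftT0 s η θ‖ₑ
      ≤ (∫⁻ s in Ioc 0 t, ‖shiftT0 s η θ‖ₑ ^ (2:ℝ)) ^ (1/2 : ℝ) * ENNReal.ofReal t ^ (1/2 : ℝ) :=
        hCS
    _ ≤ ENNReal.ofReal (∫ u in Icc (-r) 0, ‖η u‖ ^ 2) ^ (1/2 : ℝ)
          * ENNReal.ofReal t ^ (1/2 : ℝ) := by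
      rw [← hL2]
      exact mul_le_mul_left
        (ENNReal.rpow_le_rpow (lintegral_Ioc_enorm_shiftT0_rpow_two_le hθ t) (by norm_num)) _
    _ = ENNReal.ofReal (√t * √(∫ u in Icc (-r) 0, ‖η u‖ ^ 2)) := by
      rw [ENNReal.ofReal_rpow_of_nonneg (integral_nonneg fun _ => sq_nonneg _) (by norm_num),
        ENNReal.ofReal_rpow_of_nonneg ht (by norm_num), ← Real.sqrt_eq_rpow, ← Real.sqrt_eq_rpow,
        ← ENNReal.ofReal_mul (Real.sqrt_nonneg _), mul_comm]

lemma lintegral_Ioc_lintegral_enorm_shiftT0_le (κ : Measure ℝ) [SFinite κ]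
    {r : ℝ} {η : ℝ → EuclideanSpace ℝ (Fin n)} (hη : Measurable η)
    (hη2 : IntegrableOn (fun s => ‖η s‖ ^ 2) (Icc (-r) 0)) {t : ℝ} (ht : 0 ≤ t) :
    ∫⁻ s in Ioc 0 t, ∫⁻ θ in Icc (-r) 0, ‖shiftT0 s η θ‖ₑ ∂κ
      ≤ ENNReal.ofReal (√t * √(∫ u in Icc (-r) 0, ‖η u‖ ^ 2)) * κ (Icc (-r) 0) := by
  rw [lintegral_lintegral_swap (measurable_shiftT0_uncurry hη).enorm.aemeasurable,
    ← setLIntegral_const]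
  exact setLIntegral_mono measurable_const fun θ hθ =>
    lintegral_Ioc_enorm_shiftT0_le hη hη2 ht hθ.1

lemma lintegral_Ioc_lintegral_enorm_delayT_add_shiftT0_le (κ : Measure ℝ) [SFinite κ]
    (b : Fin n → ℝ) (d : EuclideanSpace ℝ (Fin n)) {η : ℝ → EuclideanSpace ℝ (Fin n)}
    {r : ℝ} (hη : Measurable η) (hη2 : IntegrableOn (fun s => ‖η s‖ ^ 2) (Icc (-r) 0))
    {t : ℝ} (ht0 : 0 ≤ t) (htr : t ≤ r) :
    ∫⁻ s in Ioc 0 t, ∫⁻ θ in Icc (-r) 0, ‖delayT b s d θ + shiftT0 s η θ‖ₑ ∂κ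
      ≤ ENNReal.ofReal (√t * √(∫ u in Icc (-r) 0, ‖η u‖ ^ 2)
          + t * (⨆ s ∈ Icc (0:ℝ) r, ‖expB b s‖) * ‖d‖) * κ (Icc (-r) 0) := by
  set K := ⨆ s ∈ Icc (0:ℝ) r, ‖expB b s‖
  set L := √t * √(∫ u in Icc (-r) 0, ‖η u‖ ^ 2)
  have hK : 0 ≤ K := iSup_norm_expB_nonneg b r
  have hinner : ∀ s ∈ Ioc 0 t,
      ∫⁻ θ in Icc (-r) 0, ‖delayT b s d θ + shiftT0 s η θ‖ₑ ∂κ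
        ≤ ENNReal.ofReal (K * ‖d‖) * κ (Icc (-r) 0)
          + ∫⁻ θ in Icc (-r) 0, ‖shiftT0 s η θ‖ₑ ∂κ := by
    intro s hs
    rw [← setLIntegral_const, ← lintegral_add_left measurable_const]
    refine setLIntegral_mono' measurableSet_Icc fun θ hθ => (enorm_add_le _ _).trans ?_
    gcongr
    rw [← ofReal_norm]
    exact ENNReal.ofReal_le_ofReal (norm_delayT_le b d (hs.2.trans htr) hθ.2)
  calc ∫⁻ s in Ioc 0 t, ∫⁻ θ in Icc (-r) 0, ‖delayT b s d θ + shiftT0 s η θ‖ₑ ∂κ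
      ≤ ∫⁻ s in Ioc 0 t, (ENNReal.ofReal (K * ‖d‖) * κ (Icc (-r) 0)
          + ∫⁻ θ in Icc (-r) 0, ‖shiftT0 s η θ‖ₑ ∂κ) :=
        setLIntegral_mono' measurableSet_Ioc hinner
    _ = ENNReal.ofReal (K * ‖d‖) * κ (Icc (-r) 0) * ENNReal.ofReal t
          + ∫⁻ s in Ioc 0 t, ∫⁻ θ in Icc (-r) 0, ‖shiftT0 s η θ‖ₑ ∂κ := by
      rw [lintegral_add_left measurable_const, setLIntegral_const, Real.volume_Ioc, sub_zero]
    _ ≤ ENNReal.ofReal (K * ‖d‖) * κ (Icc (-r) 0) * ENNReal.ofReal t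
          + ENNReal.ofReal L * κ (Icc (-r) 0) := by
      gcongr
      exact lintegral_Ioc_lintegral_enorm_shiftT0_le κ hη hη2 ht0
    _ = ENNReal.ofReal (L + t * K * ‖d‖) * κ (Icc (-r) 0) := by
      rw [ENNReal.ofReal_add (by positivity) (by positivity), mul_assoc t,
        ENNReal.ofReal_mul ht0]
      ring

end

theorem statement11_general
    (r : ℝ) (n : ℕ) (b : Fin n → ℝ)
    (μp μm : Measure ℝ) [IsFiniteMeasure μp] [IsFiniteMeasure μm]
    (d : EuclideanSpace ℝ (Fin n)) (η : ℝ → EuclideanSpace ℝ (Fin n))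
    (hη : Measurable η)
    (hη2 : IntegrableOn (fun s => ‖η s‖ ^ 2) (Icc (-r) 0))
    (t : ℝ) (ht0 : 0 ≤ t) (htr : t ≤ r) :
    ∫ s in (0:ℝ)..t, ‖delayPhi r μp μm (fun θ => delayT b s d θ + shiftT0 s η θ)‖
      ≤ (Real.sqrt t * Real.sqrt (∫ s in Icc (-r) 0, ‖η s‖ ^ 2)
            + t * (⨆ s ∈ Icc (0:ℝ) r, ‖expB b s‖) * ‖d‖)
          * ((μp (Icc (-r) 0)).toReal + (μm (Icc (-r) 0)).toReal) := by
  set C := √t * √(∫ s in Icc (-r) 0, ‖η s‖ ^ 2) + t * (⨆ s ∈ Icc (0:ℝ) r, ‖expB b s‖) * ‖d‖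
  have hC : 0 ≤ C := by have := iSup_norm_expB_nonneg b r; positivity
  have hξ : Measurable fun p : ℝ × ℝ => delayT b p.1 d p.2 + shiftT0 p.1 η p.2 :=
    (measurable_delayT_uncurry b d).add (measurable_shiftT0_uncurry hη)
  rw [intervalIntegral.integral_of_le ht0, integral_norm_eq_lintegral_enorm
    (stronglyMeasurable_delayPhi r μp μm hξ).aestronglyMeasurable]
  refine ENNReal.toReal_le_of_le_ofReal (by positivity) ?_
  calc ∫⁻ s in Ioc 0 t, ‖delayPhi r μp μm (fun θ => delayT b s d θ + shiftT0 s η θ)‖ₑ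
      ≤ (∫⁻ s in Ioc 0 t, ∫⁻ θ in Icc (-r) 0, ‖delayT b s d θ + shiftT0 s η θ‖ₑ ∂μp)
          + ∫⁻ s in Ioc 0 t, ∫⁻ θ in Icc (-r) 0, ‖delayT b s d θ + shiftT0 s η θ‖ₑ ∂μm :=
        setLIntegral_enorm_delayPhi_le r μp μm hξ _
    _ ≤ ENNReal.ofReal C * μp (Icc (-r) 0) + ENNReal.ofReal C * μm (Icc (-r) 0) :=
        add_le_add
          (lintegral_Ioc_lintegral_enorm_delayT_add_shiftT0_le μp b d hη hη2 ht0 htr)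
          (lintegral_Ioc_lintegral_enorm_delayT_add_shiftT0_le μm b d hη hη2 ht0 htr)
    _ = ENNReal.ofReal (C * ((μp (Icc (-r) 0)).toReal + (μm (Icc (-r) 0)).toReal)) := by
      rw [ENNReal.ofReal_mul hC, ENNReal.ofReal_add ENNReal.toReal_nonneg ENNReal.toReal_nonneg,
        ENNReal.ofReal_toReal (measure_ne_top _ _), ENNReal.ofReal_toReal (measure_ne_top _ _),
        mul_add]

/-- Miyadera–Voigt-type estimate for the delay operator.  For every
`d ∈ ℝⁿ`, every measurable square-integrable `η : [-r,0] → ℝⁿ` and every `0 ≤ t ≤ r`,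
`∫₀^t ‖Φ(T_s d + T₀(s)η)‖ ds ≤ (√t ‖η‖_{L²} + t K ‖d‖) |μ|`, where
`K := sup_{s∈[0,r]} ‖e^{sB}‖` and `|μ| := μ⁺([-r,0]) + μ⁻([-r,0])`. -/
theorem statement11
    (r : ℝ) (hr : 0 < r) (n : ℕ) (b : Fin n → ℝ)
    (μp μm : Measure ℝ) [IsFiniteMeasure μp] [IsFiniteMeasure μm]
    (d : EuclideanSpace ℝ (Fin n)) (η : ℝ → EuclideanSpace ℝ (Fin n))
    (hη : Measurable η)
    (hη2 : IntegrableOn (fun s => ‖η s‖ ^ 2) (Icc (-r) 0))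
    (t : ℝ) (ht0 : 0 ≤ t) (htr : t ≤ r) :
    ∫ s in (0:ℝ)..t, ‖delayPhi r μp μm (fun θ => delayT b s d θ + shiftT0 s η θ)‖
      ≤ (Real.sqrt t * Real.sqrt (∫ s in Icc (-r) 0, ‖η s‖ ^ 2)
            + t * (⨆ s ∈ Icc (0:ℝ) r, ‖expB b s‖) * ‖d‖)
          * ((μp (Icc (-r) 0)).toReal + (μm (Icc (-r) 0)).toReal) :=
  statement11_general r n b μp μm d η hη hη2 t ht0 htr
end
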